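/- Let r : 𝔤* → 𝔤 be a skew-symmetric linear map. Then the graph of r, graph(r) := {(α, r(α)) : α ∈ 𝔤*}, is a totally isotropic subspace of 𝔤* × 𝔤 with respect to the canonical pairing, and graph(r) is a Lie subalgebra of the semidirect product Lie algebra t*𝔤 = 𝔤* ⋊ 𝔤 if and only if [r,r] = 0, i.e. r is a solution of the classical Yang–Baxter equation. -/

import Mathlib

/-!
Everything reduces to points `(α, r α)` of the graph. Isotropy is skew-symmetry itself. For
closedness, the bracket of `(α, r α)` and `(β, r β)` lies in the graph iff the vector
`[r α, r β] - r (ad*_{r α} β - ad*_{r β} α)` vanishes; moving `r` across the pairing by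
skew-symmetry shows that `γ` evaluates this vector to `[r,r](α, β, γ)`, and linear forms
separate the points of a vector space.
-/

/-- The coadjoint action of `x : L` on the dual: `⟨coad x α, y⟩ = -⟨α, [x,y]⟩`. -/
noncomputable def coad {L : Type*} [LieRing L] [LieAlgebra ℝ L]
    (x : L) (α : Module.Dual ℝ L) : Module.Dual ℝ L :=
  -(α ∘ₗ (LieAlgebra.ad ℝ L x))

/-- `[r,r](α,β,γ) := ⟨γ,[r α, r β]⟩ + ⟨α,[r β, r γ]⟩ + ⟨β,[r γ, r α]⟩`. -/
def cybe {L : Type*} [LieRing L] [LieAlgebra ℝ L]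
    (r : Module.Dual ℝ L →ₗ[ℝ] L) (α β γ : Module.Dual ℝ L) : ℝ :=
  γ ⁅r α, r β⁆ + α ⁅r β, r γ⁆ + β ⁅r γ, r α⁆

/-- The canonical pairing on `𝔤* × 𝔤`: `⟨(α,x),(β,y)⟩ = α y + β x`. -/
def tpair {L : Type*} [LieRing L] [LieAlgebra ℝ L]
    (p q : Module.Dual ℝ L × L) : ℝ := p.1 q.2 + q.1 p.2

/-- The bracket of the semidirect product Lie algebra `t*𝔤 = 𝔤* ⋊ 𝔤`:
`[(α,x),(β,y)] = (ad*_x β - ad*_y α, [x,y])`. -/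
noncomputable def sdbr {L : Type*} [LieRing L] [LieAlgebra ℝ L]
    (p q : Module.Dual ℝ L × L) : Module.Dual ℝ L × L :=
  (coad p.2 q.1 - coad q.2 p.1, ⁅p.2, q.2⁆)

/-- The graph of `r : 𝔤* → 𝔤` inside `𝔤* × 𝔤`. -/
def rgraph {L : Type*} [LieRing L] [LieAlgebra ℝ L]
    (r : Module.Dual ℝ L →ₗ[ℝ] L) : Set (Module.Dual ℝ L × L) :=
  {p | p.2 = r p.1}

section

variable {L : Type*} [LieRing L] [LieAlgebra ℝ L]

@[simp]
lemma coad_apply (x : L) (α : Module.Dual ℝ L) (y : L) : coad x α y = -α ⁅x, y⁆ := by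
  simp [coad, LieAlgebra.ad_apply]

lemma forall_mem_rgraph_iff {r : Module.Dual ℝ L →ₗ[ℝ] L} {P : Module.Dual ℝ L × L → Prop} :
    (∀ p ∈ rgraph r, P p) ↔ ∀ α, P (α, r α) := by
  refine ⟨fun h α => h _ rfl, fun h p hp => ?_⟩
  rw [show p = (p.1, r p.1) from Prod.ext rfl hp]
  exact h p.1

variable {r : Module.Dual ℝ L →ₗ[ℝ] L}

lemma tpair_eq_zero_of_skew (hskew : ∀ α β : Module.Dual ℝ L, α (r β) = - β (r α))
    (α β : Module.Dual ℝ L) : tpair (α, r α) (β, r β) = 0 := by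
  simp [tpair, hskew α β]

lemma apply_lie_sub_r_coad_eq_cybe (hskew : ∀ α β : Module.Dual ℝ L, α (r β) = - β (r α))
    (α β γ : Module.Dual ℝ L) :
    γ (⁅r α, r β⁆ - r (coad (r α) β - coad (r β) α)) = cybe r α β γ := by
  have hγ : γ (r (coad (r α) β - coad (r β) α)) = -(coad (r α) β - coad (r β) α) (r γ) :=
    hskew _ _
  have hβ : β ⁅r γ, r α⁆ = -β ⁅r α, r γ⁆ := by rw [← lie_skew, map_neg]
  rw [map_sub, hγ]
  simp only [LinearMap.sub_apply, coad_apply, cybe]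
  linarith

lemma sdbr_mem_rgraph_iff (hskew : ∀ α β : Module.Dual ℝ L, α (r β) = - β (r α))
    (α β : Module.Dual ℝ L) :
    sdbr (α, r α) (β, r β) ∈ rgraph r ↔ ∀ γ, cybe r α β γ = 0 := by
  simp only [← apply_lie_sub_r_coad_eq_cybe hskew, Module.forall_dual_apply_eq_zero_iff,
    sub_eq_zero]
  exact Iff.rfl

end

theorem stmt1_general {L : Type*} [LieRing L] [LieAlgebra ℝ L]
    (r : Module.Dual ℝ L →ₗ[ℝ] L)
    (hskew : ∀ α β : Module.Dual ℝ L, α (r β) = - β (r α)) :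
    (∀ p ∈ rgraph r, ∀ q ∈ rgraph r, tpair p q = 0) ∧
    ((∀ p ∈ rgraph r, ∀ q ∈ rgraph r, sdbr p q ∈ rgraph r) ↔
      (∀ α β γ : Module.Dual ℝ L, cybe r α β γ = 0)) := by
  refine ⟨?_, ?_⟩
  · simpa only [forall_mem_rgraph_iff] using tpair_eq_zero_of_skew hskew
  · simp only [forall_mem_rgraph_iff, sdbr_mem_rgraph_iff hskew]

/-- for skew-symmetric `r`, the graph of `r` is totally isotropic for the
canonical pairing, and it is a Lie subalgebra of `t*𝔤 = 𝔤* ⋊ 𝔤` iff `[r,r] = 0`. -/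
theorem stmt1 {L : Type*} [LieRing L] [LieAlgebra ℝ L] [FiniteDimensional ℝ L]
    (r : Module.Dual ℝ L →ₗ[ℝ] L)
    (hskew : ∀ α β : Module.Dual ℝ L, α (r β) = - β (r α)) :
    (∀ p ∈ rgraph r, ∀ q ∈ rgraph r, tpair p q = 0) ∧
    ((∀ p ∈ rgraph r, ∀ q ∈ rgraph r, sdbr p q ∈ rgraph r) ↔
      (∀ α β γ : Module.Dual ℝ L, cybe r α β γ = 0)) :=
  stmt1_general r hskew
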